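/- arXiv:2406.13341 — 3 statements merged into one kernel-verified Lean document; each statement's English description precedes it below -/
import Mathlib

section
/- Let H' and H'' be two projections of the n-dimensional Hamming graph G = □_{i=1}^n K_k satisfying dist(H',H'') ≤ 2. Then there exists a projection H of G with dim(H) ≤ dim(H') + dim(H'') + dist(H',H'') such that the 2-neighbour bootstrap closure of V(H') ∪ V(H'') equals V(H). -/
open scoped Classical

section Defs

variable {V : Type*}

/-- One round of 2-neighbour bootstrap percolation: a healthy vertex becomes infected
if it has at least two infected neighbours. -/
def bootStep (G : SimpleGraph V) (A : Set V) : Set V :=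
  A ∪ {v | ∃ u w, u ≠ w ∧ G.Adj v u ∧ G.Adj v w ∧ u ∈ A ∧ w ∈ A}

/-- Iterates of the bootstrap process. -/
def bootIter (G : SimpleGraph V) (A : Set V) : ℕ → Set V
  | 0 => A
  | j + 1 => bootStep G (bootIter G A j)

/-- The 2-neighbour bootstrap closure `[A]` of a set `A` of initially infected vertices. -/
def bootClosure (G : SimpleGraph V) (A : Set V) : Set V :=
  ⋃ j, bootIter G A j

/-- Graph distance between two sets of vertices. -/
noncomputable def setDist (G : SimpleGraph V) (X Y : Set V) : ℕ :=
  sInf {d | ∃ u ∈ X, ∃ v ∈ Y, G.dist u v = d}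

/-- A sequence of `m` vertices `v 0, …, v (m-1)` (a "sequentially spanning sequence of
length `m-1`") is sequentially spanning if each vertex lies at distance exactly two from the
bootstrap closure of its predecessors. -/
def SeqSpanSeq (G : SimpleGraph V) (m : ℕ) (v : Fin m → V) : Prop :=
  ∀ i : Fin m, 0 < (i : ℕ) →
    setDist G (bootClosure G (v '' {j | (j : ℕ) < (i : ℕ)})) {v i} = 2

/-- A set `U` is sequentially spanning if its vertices admit an ordering which is a
sequentially spanning sequence. -/
def SeqSpanSet (G : SimpleGraph V) (U : Set V) : Prop :=
  ∃ (m : ℕ) (v : Fin (m + 1) → V), Function.Injective v ∧ Set.range v = U ∧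
    SeqSpanSeq G (m + 1) v

/-- A family `F` of vertex sets is disjointly internally spanned by `A` if there are
pairwise disjoint subsets of `A` internally spanning each member of `F`. -/
def DisjIntSpanned (G : SimpleGraph V) (A : Set V) (F : Set (Set V)) : Prop :=
  ∃ B : Set V → Set V,
    (∀ U ∈ F, B U ⊆ A ∧ bootClosure G (B U ∩ U) = U) ∧
    (∀ U ∈ F, ∀ W ∈ F, U ≠ W → Disjoint (B U) (B W))

/-- The probability that the `p`-random subset of a finite vertex set satisfies the event `E`. -/
noncomputable def probEvent [Fintype V] [DecidableEq V] (p : ℝ) (E : Set V → Prop) : ℝ :=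
  ∑ A : Finset V, if E ↑A then p ^ A.card * (1 - p) ^ (Fintype.card V - A.card) else 0

end Defs

/-- The `n`-dimensional Hamming graph on `[k]^n`: two vertices are adjacent iff they
differ in exactly one coordinate. -/
def hamming (n k : ℕ) : SimpleGraph (Fin n → Fin k) where
  Adj v w := (Finset.univ.filter fun i => v i ≠ w i).card = 1
  symm := by
    constructor
    intro v w h
    have e : (Finset.univ.filter fun i => w i ≠ v i) =
        Finset.univ.filter fun i => v i ≠ w i :=
      Finset.filter_congr fun i _ => ne_comm
    rw [e]; exact h
  loopless := by
    constructor
    intro v h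
    simp at h

/-- The vertex set of the projection of the Hamming graph specified by `S`:
coordinates with `S i = some a` are fixed to `a`, coordinates with `S i = none` are free. -/
def projSet {n k : ℕ} (S : Fin n → Option (Fin k)) : Set (Fin n → Fin k) :=
  {v | ∀ i : Fin n, ∀ a : Fin k, S i = some a → v i = a}

/-- The dimension of a projection: the number of free coordinates. -/
def projDim {n k : ℕ} (S : Fin n → Option (Fin k)) : ℕ :=
  (Finset.univ.filter fun i => S i = none).card

/-- Probability that the Hamming graph percolates from the `p`-random subset. -/
noncomputable def percProb (n k : ℕ) (p : ℝ) : ℝ :=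
  probEvent p (fun A => bootClosure (hamming n k) A = Set.univ)

/-- Probability that the projection `S` is internally spanned by the `p`-random subset. -/
noncomputable def intSpanProb (n k : ℕ) (p : ℝ) (S : Fin n → Option (Fin k)) : ℝ :=
  probEvent p (fun A => bootClosure (hamming n k) (A ∩ projSet S) = projSet S)

/-- `p_* = n^{-2} k^{-2√n + 1}`. -/
noncomputable def pStar (n k : ℕ) : ℝ :=
  (n : ℝ) ^ (-2 : ℝ) * (k : ℝ) ^ (-2 * Real.sqrt n + 1)

/-- The critical probability for 2-neighbour bootstrap percolation on the Hamming graph. -/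
noncomputable def pc (n k : ℕ) : ℝ :=
  sInf {p : ℝ | 0 < p ∧ p < 1 ∧ 1 / 2 ≤ percProb n k p}

/-- A canonical projection of dimension `m` (the first `m` coordinates are free,
the remaining ones are fixed to `x`). -/
def canonProj (n k m : ℕ) (x : Fin k) : Fin n → Option (Fin k) :=
  fun i => if (i : ℕ) < m then none else some x

/-- The set `I_{H,t}` of admissible indices `(ℓ, i, j, d)` for a projection of dimension `m`
and threshold `t`. -/
def indexSet (m t : ℕ) : Finset (ℕ × ℕ × ℕ × ℕ) :=
  ((Finset.range (m + 1)) ×ˢ (Finset.range (m + 1)) ×ˢ (Finset.range (m + 1)) ×ˢ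
      (Finset.range 3)).filter
    fun q => t ≤ q.1 ∧ q.1 ≤ min (q.2.1 + q.2.2.1 + q.2.2.2) m ∧
      q.2.2.1 ≤ q.2.1 ∧ q.2.1 < t ∧ q.2.1 + q.2.2.2 < q.1

/-- `U_{H,t}(ℓ,i,j,d)`: the number of candidate quadruples `(H_ℓ, {H_i, H_j}, d)` inside the
projection `SH` at threshold `t` with dimensions `ℓ, i, j` and distance `d`; the pair
`{H_i, H_j}` is unordered. -/
noncomputable def candCountIn (n k : ℕ) (SH : Fin n → Option (Fin k)) (t : ℕ)
    (q : ℕ × ℕ × ℕ × ℕ) : ℕ :=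
  Nat.card {c : (Fin n → Option (Fin k)) × Sym2 (Fin n → Option (Fin k)) //
    t ≤ q.1 ∧ q.2.2.1 ≤ q.2.1 ∧ q.2.1 < t ∧ q.2.2.2 ≤ 2 ∧
    projDim c.1 = q.1 ∧ projSet c.1 ⊆ projSet SH ∧
    ∃ a b, c.2 = s(a, b) ∧ projDim a = q.2.1 ∧ projDim b = q.2.2.1 ∧
      setDist (hamming n k) (projSet a) (projSet b) = q.2.2.2 ∧
      bootClosure (hamming n k) (projSet a ∪ projSet b) = projSet c.1}

/-- `U_{G,t}(ℓ,i,j,d)`: the number of candidate quadruples in the whole Hamming graph. -/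
noncomputable def candCount (n k t : ℕ) (q : ℕ × ℕ × ℕ × ℕ) : ℕ :=
  candCountIn n k (fun _ => none) t q

/-- The constants `Ψ_m`. -/
noncomputable def Psi (n k : ℕ) : ℕ → ℝ
  | 0 => 1
  | m + 1 =>
    if m + 1 ≤ 14 then (1 / 2) * (9 * Real.sqrt 2 / 10) ^ (m + 1)
    else Psi n k m * (1 + (k : ℝ) ^ (-(((m : ℝ) + 1) - 11) / 2)) * (1 + 4 / (n : ℝ))

/-- The function `Φ(m) = Ψ_m p^{m/2+1} m! 2^{-m/2} (k-1)^m k^{(m²+2m)/4}`. -/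
noncomputable def Phi (n k : ℕ) (p : ℝ) (m : ℕ) : ℝ :=
  Psi n k m * p ^ ((m : ℝ) / 2 + 1) * (Nat.factorial m : ℝ) * (2 : ℝ) ^ (-(m : ℝ) / 2) *
    ((k : ℝ) - 1) ^ m * (k : ℝ) ^ (((m : ℝ) ^ 2 + 2 * (m : ℝ)) / 4)

/-- `|S_{m-1}|`: the number of sequentially spanning sequences with `m` vertices
(i.e. of length `m - 1`) in the Hamming graph. -/
noncomputable def seqCount (n k m : ℕ) : ℕ :=
  Nat.card {v : Fin m → (Fin n → Fin k) // SeqSpanSeq (hamming n k) m v}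

/-- `|P_{ℓ,i}|`: the number of unordered pairs of sequentially spanning sequences of
length `ℓ` whose vertex sets intersect in exactly `i` vertices. -/
noncomputable def pairCount (n k ℓ i : ℕ) : ℕ :=
  Nat.card {q : Sym2 (Fin (ℓ + 1) → (Fin n → Fin k)) //
    ∃ a b, q = s(a, b) ∧ SeqSpanSeq (hamming n k) (ℓ + 1) a ∧
      SeqSpanSeq (hamming n k) (ℓ + 1) b ∧ (Set.range a ∩ Set.range b).ncard = i}

/-!
Choose `u ∈ H'` and `w ∈ H''` at distance `d ≤ 2`. Every vertex on a geodesic from `u` to `w` is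
infected: for `d = 2` the middle vertex has the two infected neighbours `u` and `w`. If a
projection `P` is infected and so is a vertex adjacent to `P` across a fixed coordinate `i`, then
the translate of `P` through that vertex is infected (by induction on the distance to the vertex),
and every vertex on a line in direction `i` meeting both copies has two infected neighbours, so `P`
with coordinate `i` freed is infected. Freeing in turn the coordinates where `u` and `w` differ,
then the free coordinates of `H''`, enlarges `H'` to a projection `H ⊇ H''` of dimension at most
`dim H' + d + dim H''` inside `[V(H') ∪ V(H'')]`. Projections are closed under the process, so
`[V(H') ∪ V(H'')] = V(H)`.
-/

open Function Finset

section Bootstrap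

variable {V : Type*} {G : SimpleGraph V} {A B : Set V}

lemma subset_bootClosure : A ⊆ bootClosure G A :=
  Set.subset_iUnion (bootIter G A) 0

lemma bootIter_mono (G : SimpleGraph V) (A : Set V) : Monotone (bootIter G A) :=
  monotone_nat_of_le_succ fun _ => Set.subset_union_left

lemma mem_bootClosure_of_adj {u v w : V} (hne : u ≠ w) (hu : G.Adj v u) (hw : G.Adj v w)
    (huA : u ∈ bootClosure G A) (hwA : w ∈ bootClosure G A) : v ∈ bootClosure G A := by
  obtain ⟨i, hi⟩ := Set.mem_iUnion.mp huA
  obtain ⟨j, hj⟩ := Set.mem_iUnion.mp hwA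
  exact Set.mem_iUnion.mpr ⟨max i j + 1, Or.inr ⟨u, w, hne, hu, hw,
    bootIter_mono G A (le_max_left i j) hi, bootIter_mono G A (le_max_right i j) hj⟩⟩

lemma bootClosure_subset (hAB : A ⊆ B) (hB : bootStep G B ⊆ B) : bootClosure G A ⊆ B := by
  refine Set.iUnion_subset fun j => ?_
  induction j with
  | zero => exact hAB
  | succ j ih =>
    rintro v (hv | ⟨u, w, hne, hu, hw, huA, hwA⟩)
    · exact ih hv
    · exact hB (Or.inr ⟨u, w, hne, hu, hw, ih huA, ih hwA⟩)

lemma exists_dist_eq_setDist (hA : A.Nonempty) (hB : B.Nonempty) :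
    ∃ u ∈ A, ∃ v ∈ B, G.dist u v = setDist G A B :=
  Nat.sInf_mem (s := {d | ∃ u ∈ A, ∃ v ∈ B, G.dist u v = d})
    ⟨_, hA.some, hA.some_mem, hB.some, hB.some_mem, rfl⟩

end Bootstrap

section HammingGraph

variable {n k : ℕ} {v w : Fin n → Fin k} {i : Fin n} {a : Fin k}

lemma hamming_adj_iff : (hamming n k).Adj v w ↔ hammingDist v w = 1 := Iff.rfl

lemma hammingDist_update_add_one (h : v i ≠ w i) :
    hammingDist (update v i (w i)) w + 1 = hammingDist v w := by
  have hs : ({j | update v i (w i) j ≠ w j} : Finset (Fin n)) =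
      ({j | v j ≠ w j} : Finset (Fin n)).erase i := by
    ext j
    rcases eq_or_ne j i with rfl | hj <;> simp [*]
  rw [hammingDist, hammingDist, hs, card_erase_add_one (by simpa using h)]

lemma hamming_adj_update (h : a ≠ v i) : (hamming n k).Adj v (update v i a) := by
  have := hammingDist_update_add_one (i := i) (w := update v i a) (by simpa using h.symm)
  rw [hamming_adj_iff, ← this]
  simp

lemma update_eq_of_hamming_adj (h : (hamming n k).Adj v w) (hi : v i ≠ w i) :
    update v i (w i) = w := by
  have := hammingDist_update_add_one hi
  rw [hamming_adj_iff.mp h] at this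
  exact hammingDist_eq_zero.mp (by omega)

lemma hamming_reachable (v w : Fin n → Fin k) : (hamming n k).Reachable v w := by
  induction hd : hammingDist v w generalizing v with
  | zero => rw [hammingDist_eq_zero.mp hd]
  | succ d ih =>
    have hvw : hammingDist v w ≠ 0 := by omega
    obtain ⟨i, hi⟩ := Function.ne_iff.mp (hammingDist_ne_zero.mp hvw)
    have := hammingDist_update_add_one hi
    exact (hamming_adj_update (Ne.symm hi)).reachable.trans (ih _ (by omega))

lemma hammingDist_le_length (p : (hamming n k).Walk v w) : hammingDist v w ≤ p.length := by
  induction p with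
  | nil => simp
  | @cons x y z h p ih =>
    have := (hammingDist_triangle x y z).trans (Nat.add_le_add_left ih _)
    rw [hamming_adj_iff.mp h] at this
    simpa [add_comm] using this

lemma hammingDist_le_dist (v w : Fin n → Fin k) : hammingDist v w ≤ (hamming n k).dist v w := by
  obtain ⟨p, hp⟩ := (hamming_reachable v w).exists_walk_length_eq_dist
  exact hp ▸ hammingDist_le_length p

end HammingGraph

section Projections

variable {n k : ℕ} {T : Fin n → Option (Fin k)} {v w : Fin n → Fin k} {i : Fin n}

lemma projSet_nonempty (hk : 0 < k) (T : Fin n → Option (Fin k)) : (projSet T).Nonempty :=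
  ⟨fun i => (T i).getD ⟨0, hk⟩, fun i a ha => by simp [ha]⟩

lemma update_mem_projSet (hv : v ∈ projSet T) (hw : w ∈ projSet T) (i : Fin n) :
    update v i (w i) ∈ projSet T := by
  intro j a ha
  rcases eq_or_ne j i with rfl | hj
  · simpa using hw j a ha
  · rw [update_of_ne hj]
    exact hv j a ha

lemma update_mem_projSet_of_eq_none (hv : v ∈ projSet T) (hi : T i = none) (b : Fin k) :
    update v i b ∈ projSet T := by
  intro j a ha
  rcases eq_or_ne j i with rfl | hj
  · simp [hi] at ha
  · rw [update_of_ne hj]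
    exact hv j a ha

lemma update_mem_projSet_update {o : Option (Fin k)} (hv : v ∈ projSet (update T i o))
    (a : Fin k) : update v i a ∈ projSet (update T i (some a)) := by
  intro j b hb
  rcases eq_or_ne j i with rfl | hj
  · simpa using hb
  · rw [update_of_ne hj] at hb ⊢
    exact hv j b (by rwa [update_of_ne hj])

lemma bootStep_projSet_subset (T : Fin n → Option (Fin k)) :
    bootStep (hamming n k) (projSet T) ⊆ projSet T := by
  rintro v (hv | ⟨u, w, hne, hu, hw, huT, hwT⟩)
  · exact hv
  · intro i a ha
    by_contra hvi
    have hui : v i ≠ u i := by rwa [huT i a ha]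
    have hwi : v i ≠ w i := by rwa [hwT i a ha]
    apply hne
    rw [← update_eq_of_hamming_adj hu hui, ← update_eq_of_hamming_adj hw hwi, huT i a ha,
      hwT i a ha]

lemma bootClosure_subset_projSet {X : Set (Fin n → Fin k)} (h : X ⊆ projSet T) :
    bootClosure (hamming n k) X ⊆ projSet T :=
  bootClosure_subset h (bootStep_projSet_subset T)

end Projections

section Spreading

variable {n k : ℕ} {X : Set (Fin n → Fin k)} {T : Fin n → Option (Fin k)}
  {u v w : Fin n → Fin k} {i : Fin n} {a b : Fin k}

lemma update_mem_bootClosure_of_hammingDist_le_two (hu : u ∈ bootClosure (hamming n k) X)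
    (hw : w ∈ bootClosure (hamming n k) X) (hd : hammingDist u w ≤ 2) (hi : u i ≠ w i) :
    update u i (w i) ∈ bootClosure (hamming n k) X := by
  have h := hammingDist_update_add_one hi
  obtain h0 | h1 : hammingDist (update u i (w i)) w = 0 ∨
      hammingDist (update u i (w i)) w = 1 := by omega
  · rwa [hammingDist_eq_zero.mp h0]
  · exact mem_bootClosure_of_adj (fun e => hi (congrFun e i)) (hamming_adj_update hi.symm).symm
      (hamming_adj_iff.mpr h1) hu hw

lemma projSet_update_some_subset_bootClosure (hTi : T i = some a)
    (hT : projSet T ⊆ bootClosure (hamming n k) X) (hv : v ∈ projSet T) (hb : b ≠ a)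
    (hvb : update v i b ∈ bootClosure (hamming n k) X) :
    projSet (update T i (some b)) ⊆ bootClosure (hamming n k) X := by
  set w := update v i b
  have hw : w ∈ projSet (update T i (some b)) :=
    update_mem_projSet_update (o := T i) (by rwa [update_eq_self]) b
  -- `y` in the translate has the neighbour `update y i a ∈ T` and a neighbour closer to `w`.
  intro y hy
  induction hd : hammingDist y w using Nat.strong_induction_on generalizing y with
  | _ d ih =>
  obtain rfl | hyw := eq_or_ne y w
  · exact hvb
  obtain ⟨j, hj⟩ := Function.ne_iff.mp hyw
  have hyi : y i = b := by simpa using hy i b (by simp)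
  have hji : j ≠ i := by
    rintro rfl
    exact hj (by simp [w, hyi])
  have hya : update y i a ∈ projSet T := by
    simpa [← hTi] using update_mem_projSet_update hy a
  have hdist := hammingDist_update_add_one hj
  refine mem_bootClosure_of_adj ?_ (hamming_adj_update (by rw [hyi]; exact hb.symm))
    (hamming_adj_update hj.symm) (hT hya)
    (ih (hammingDist (update y j (w j)) w) (by omega) (update_mem_projSet hy hw j) rfl)
  intro h
  exact hb (by simpa [update_of_ne hji.symm, hyi] using (congrFun h i).symm)

lemma projSet_update_none_subset_bootClosure (hT : projSet T ⊆ bootClosure (hamming n k) X)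
    (hv : v ∈ projSet T) (hb : b ≠ v i) (hvb : update v i b ∈ bootClosure (hamming n k) X) :
    projSet (update T i none) ⊆ bootClosure (hamming n k) X := by
  cases hTi : T i with
  | none => rwa [← hTi, update_eq_self]
  | some a =>
    have hva : v i = a := hv i a hTi
    have hTb := projSet_update_some_subset_bootClosure hTi hT hv (hva ▸ hb) hvb
    intro x hx
    have hxa : update x i a ∈ projSet T := by
      simpa [← hTi] using update_mem_projSet_update hx a
    have hxb := hTb (update_mem_projSet_update hx b)
    obtain rfl | hax := eq_or_ne a (x i)
    · simpa using hT hxa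
    obtain rfl | hbx := eq_or_ne b (x i)
    · simpa using hxb
    refine mem_bootClosure_of_adj ?_ (hamming_adj_update hax) (hamming_adj_update hbx)
      (hT hxa) hxb
    intro h
    exact hb ((by simpa using (congrFun h i).symm : b = a).trans hva.symm)

end Spreading

def unfix {n k : ℕ} (s : Finset (Fin n)) (T : Fin n → Option (Fin k)) : Fin n → Option (Fin k) :=
  fun i => if i ∈ s then none else T i

section Unfix

variable {n k : ℕ} {X : Set (Fin n → Fin k)} {s : Finset (Fin n)}
  {T S : Fin n → Option (Fin k)} {u v w : Fin n → Fin k}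

lemma unfix_insert (i : Fin n) : unfix (insert i s) T = update (unfix s T) i none := by
  funext j
  rcases eq_or_ne j i with rfl | hj <;> simp [unfix, *]

lemma projSet_subset_unfix : projSet T ⊆ projSet (unfix s T) := by
  intro v hv j a ha
  simp only [unfix] at ha
  split_ifs at ha
  exact hv j a ha

lemma mem_projSet_unfix (hu : u ∈ projSet T) (h : ∀ i ∉ s, v i = u i) :
    v ∈ projSet (unfix s T) := by
  intro j a ha
  simp only [unfix] at ha
  split_ifs at ha with hj
  rw [h j hj]
  exact hu j a ha

lemma projSet_subset_unfix_of_mem (hT : w ∈ projSet T) (hS : w ∈ projSet S) :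
    projSet S ⊆ projSet (unfix {i | S i = none} T) := by
  intro v hv j a ha
  simp only [unfix, mem_filter, mem_univ, true_and] at ha
  split_ifs at ha with hj
  obtain ⟨c, hc⟩ := Option.ne_none_iff_exists'.mp hj
  rw [hv j c hc, ← hS j c hc, hT j a ha]

lemma projDim_unfix_le : projDim (unfix s T) ≤ projDim T + s.card := by
  unfold projDim
  calc #{i | unfix s T i = none} ≤ #(({i | T i = none} : Finset (Fin n)) ∪ s) := by
        refine card_le_card fun i => ?_
        by_cases hi : i ∈ s <;> simp [unfix, hi]
    _ ≤ #{i | T i = none} + #s := card_union_le _ _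

lemma projSet_unfix_subset_bootClosure (hT : projSet T ⊆ bootClosure (hamming n k) X)
    (hv : v ∈ projSet T)
    (hs : ∀ i ∈ s, ∃ b ≠ v i, update v i b ∈ bootClosure (hamming n k) X) :
    projSet (unfix s T) ⊆ bootClosure (hamming n k) X := by
  induction s using Finset.induction_on with
  | empty => rwa [show unfix ∅ T = T from funext fun _ => if_neg (notMem_empty _)]
  | insert i s _ ih =>
    obtain ⟨b, hb, hvb⟩ := hs i (mem_insert_self i s)
    rw [unfix_insert]
    exact projSet_update_none_subset_bootClosure (ih fun j hj => hs j (mem_insert_of_mem hj))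
      (projSet_subset_unfix hv) hb hvb

end Unfix

theorem stmt4 (n k : ℕ) (hk : 2 ≤ k) (S₁ S₂ : Fin n → Option (Fin k))
    (hd : setDist (hamming n k) (projSet S₁) (projSet S₂) ≤ 2) :
    ∃ S : Fin n → Option (Fin k),
      projDim S ≤ projDim S₁ + projDim S₂ + setDist (hamming n k) (projSet S₁) (projSet S₂) ∧
      bootClosure (hamming n k) (projSet S₁ ∪ projSet S₂) = projSet S := by
  have : Nontrivial (Fin k) := Fin.nontrivial_iff_two_le.mpr hk
  set C := bootClosure (hamming n k) (projSet S₁ ∪ projSet S₂)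
  have hC₁ : projSet S₁ ⊆ C := fun v hv => subset_bootClosure (Or.inl hv)
  have hC₂ : projSet S₂ ⊆ C := fun v hv => subset_bootClosure (Or.inr hv)
  obtain ⟨u, hu, w, hw, huw⟩ :=
    exists_dist_eq_setDist (projSet_nonempty (by omega) S₁) (projSet_nonempty (by omega) S₂)
  set D : Finset (Fin n) := {i | u i ≠ w i}
  have hD : #D ≤ setDist (hamming n k) (projSet S₁) (projSet S₂) :=
    huw ▸ hammingDist_le_dist u w
  have hT₁ : projSet (unfix D S₁) ⊆ C :=
    projSet_unfix_subset_bootClosure hC₁ hu fun i hi => ⟨w i, (mem_filter.mp hi).2.symm,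
      update_mem_bootClosure_of_hammingDist_le_two (hC₁ hu) (hC₂ hw) (hD.trans hd)
        (mem_filter.mp hi).2⟩
  have hwT₁ : w ∈ projSet (unfix D S₁) :=
    mem_projSet_unfix hu fun i hi => (by simpa [D] using hi : u i = w i).symm
  have hT : projSet (unfix {i | S₂ i = none} (unfix D S₁)) ⊆ C :=
    projSet_unfix_subset_bootClosure hT₁ hwT₁ fun i hi =>
      have ⟨b, hb⟩ := exists_ne (w i)
      ⟨b, hb, hC₂ (update_mem_projSet_of_eq_none hw (mem_filter.mp hi).2 b)⟩
  refine ⟨_, ?_, (bootClosure_subset_projSet (Set.union_subset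
    (projSet_subset_unfix.trans projSet_subset_unfix)
    (projSet_subset_unfix_of_mem hwT₁ hw))).antisymm hT⟩
  calc _ ≤ projDim S₁ + #D + projDim S₂ :=
        projDim_unfix_le.trans (Nat.add_le_add_right projDim_unfix_le _)
    _ ≤ _ := by omega
end

section
/- Let 2 ≤ k ≤ 2^{√n}, p ≤ p_* := n^{-2} k^{-2√n+1}, and D := ⌊2√n⌋ − 2. Then Σ_{(ℓ,i,j,d) ∈ I_{G,D}^{(2)}} f(ℓ,i,j,d) → 0 as n → ∞, uniformly over all such k and p, where I_{G,D}^{(2)} := {(ℓ,i,j,d) ∈ I_{G,D} : ℓ > 3√n} and f(ℓ,i,j,d) := U_{G,D}(ℓ,i,j,d) · Φ(i) · Φ(j). -/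
open scoped Classical

open Filter Topology

/-!
Every term of the sum is bounded crudely. A candidate quadruple is a projection `H_ℓ` together
with an unordered pair of subprojections of it, so `U ≤ n^ℓ k^(n + 4ℓ)`, and for `p ≤ p_*`,
`Φ(m) ≤ (10n)^m k^(m²/4 - (√n - 2)m + 1 - 2√n)`. On the region `j ≤ i ≤ 2√n - 3`,
`3√n < ℓ ≤ i + j + 2` the resulting exponent of `k` is a convex function of `(i, j)` that is at
most `-n/2` at the vertices, so each of the at most `n^4` terms is at most `n^(13√n) 2^(-n/2)`,
and `n^(14√n) 2^(-n/2) → 0`.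
-/

section Projections

variable {n k : ℕ}

lemma getD_mem_projSet (x : Fin k) (a : Fin n → Option (Fin k)) :
    (fun i => (a i).getD x) ∈ projSet a := by
  intro i y hy
  simp [hy]

lemma eq_some_of_projSet_subset (hk : 2 ≤ k) {a S : Fin n → Option (Fin k)}
    (h : projSet a ⊆ projSet S) {i : Fin n} {x : Fin k} (hx : S i = some x) :
    a i = some x := by
  have : Nontrivial (Fin k) := Fin.nontrivial_iff_two_le.mpr hk
  obtain ⟨z, hz⟩ := exists_ne x
  have hvi : (a i).getD z = x := h (getD_mem_projSet z a) i x hx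
  cases ha : a i with
  | none => simp [ha] at hvi; exact absurd hvi hz
  | some y => simp_all

/-- A subprojection of `S` is determined by its entries at the free coordinates of `S`. -/
lemma card_subprojections_le (hk : 2 ≤ k) (S : Fin n → Option (Fin k)) :
    Nat.card {a : Fin n → Option (Fin k) // projSet a ⊆ projSet S} ≤ (k + 1) ^ projDim S := by
  have hinj : Function.Injective fun a : {a : Fin n → Option (Fin k) // projSet a ⊆ projSet S} =>
      fun i : {i // S i = none} => a.1 i := by
    rintro ⟨a, ha⟩ ⟨b, hb⟩ hab
    ext i : 2
    cases hS : S i with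
    | none => exact congrFun hab ⟨i, hS⟩
    | some x =>
      exact (eq_some_of_projSet_subset hk ha hS).trans (eq_some_of_projSet_subset hk hb hS).symm
  calc _ ≤ Nat.card ({i // S i = none} → Option (Fin k)) := Nat.card_le_card_of_injective _ hinj
    _ = (k + 1) ^ projDim S := by
      simp [Nat.card_eq_fintype_card, Fintype.card_subtype, projDim]

lemma card_projDim_eq_le (hk : 0 < k) (ℓ : ℕ) :
    Nat.card {S : Fin n → Option (Fin k) // projDim S = ℓ} ≤ n.choose ℓ * k ^ n := by
  have hinj : Function.Injective fun S : {S : Fin n → Option (Fin k) // projDim S = ℓ} =>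
      ((⟨Finset.univ.filter fun i => S.1 i = none, S.2⟩ : {T : Finset (Fin n) // T.card = ℓ}),
        fun i => (S.1 i).getD ⟨0, hk⟩) := by
    rintro ⟨S, _⟩ ⟨S', _⟩ h
    simp only [Prod.mk.injEq, Subtype.mk.injEq, Finset.ext_iff, Finset.mem_filter,
      Finset.mem_univ, true_and, funext_iff] at h
    ext i : 2
    have hfree := h.1 i
    have hval := h.2 i
    cases hS : S i <;> cases hS' : S' i <;> simp_all
  calc _ ≤ Nat.card ({T : Finset (Fin n) // T.card = ℓ} × (Fin n → Fin k)) :=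
        Nat.card_le_card_of_injective _ hinj
    _ = n.choose ℓ * k ^ n := by simp [Nat.card_eq_fintype_card, Fintype.card_finset_len]

lemma Nat.card_sym2_le (α : Type*) [Finite α] : Nat.card (Sym2 α) ≤ Nat.card α ^ 2 := by
  rw [sq, ← Nat.card_prod]
  exact Nat.card_le_card_of_surjective _ Sym2.mk_surjective

/-- A candidate quadruple is a projection `H` of dimension `ℓ` together with an unordered pair
of subprojections of `H`, since `H_i, H_j ⊆ [H_i ∪ H_j] = H`. -/
lemma candCountIn_le (hk : 2 ≤ k) (SH : Fin n → Option (Fin k)) (t : ℕ)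
    (q : ℕ × ℕ × ℕ × ℕ) :
    candCountIn n k SH t q ≤ n ^ q.1 * k ^ (n + 4 * q.1) := by
  let Sub (S : Fin n → Option (Fin k)) := {a : Fin n → Option (Fin k) // projSet a ⊆ projSet S}
  let f (x : Σ S : {S : Fin n → Option (Fin k) // projDim S = q.1}, Sym2 (Sub S.1)) :
      (Fin n → Option (Fin k)) × Sym2 (Fin n → Option (Fin k)) :=
    (x.1.1, x.2.map Subtype.val)
  rw [candCountIn]
  calc _ ≤ Nat.card (Set.range f) := by
        refine Nat.card_mono (Set.toFinite _) ?_
        rintro ⟨S, w⟩ ⟨-, -, -, -, hdim, -, a, b, rfl, -, -, -, hcl⟩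
        have hsub : projSet a ∪ projSet b ⊆ projSet S :=
          hcl ▸ Set.subset_iUnion (bootIter _ _) 0
        exact ⟨⟨⟨S, hdim⟩, s(⟨a, (Set.union_subset_iff.1 hsub).1⟩,
          ⟨b, (Set.union_subset_iff.1 hsub).2⟩)⟩, rfl⟩
    _ ≤ ∑ S : {S : Fin n → Option (Fin k) // projDim S = q.1}, Nat.card (Sym2 (Sub S.1)) :=
      (Finite.card_range_le f).trans_eq Nat.card_sigma
    _ ≤ ∑ _S : {S : Fin n → Option (Fin k) // projDim S = q.1}, ((k + 1) ^ q.1) ^ 2 := by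
      gcongr with S
      exact (Nat.card_sym2_le _).trans
        (Nat.pow_le_pow_left (S.2 ▸ card_subprojections_le hk S.1 :) 2)
    _ ≤ n.choose q.1 * k ^ n * (k ^ 2) ^ (2 * q.1) := by
      rw [Finset.sum_const, Finset.card_univ, ← Nat.card_eq_fintype_card, smul_eq_mul, ← pow_mul,
        mul_comm q.1]
      gcongr
      · exact card_projDim_eq_le (by omega) q.1
      · nlinarith
    _ ≤ n ^ q.1 * k ^ (n + 4 * q.1) := by
      rw [← pow_mul, ← mul_assoc, pow_add, mul_assoc]
      exact Nat.mul_le_mul_right _ (Nat.choose_le_pow n q.1)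

end Projections

section Estimates

variable {n k : ℕ} {p : ℝ}

lemma Psi_nonneg (n k m : ℕ) : 0 ≤ Psi n k m := by
  induction m with
  | zero => simp [Psi]
  | succ m ih =>
    rw [Psi]
    split_ifs <;> positivity

lemma Psi_le_ten_pow (hn : 1 ≤ n) (hk : 1 ≤ k) (m : ℕ) : Psi n k m ≤ 10 ^ m := by
  induction m with
  | zero => simp [Psi]
  | succ m ih =>
    rw [Psi]
    split_ifs with hm
    · have hsqrt : Real.sqrt 2 ≤ 2 := by
        rw [Real.sqrt_le_left (by norm_num)]; norm_num
      have : 9 * Real.sqrt 2 / 10 ≤ 10 := by linarith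
      calc 1 / 2 * (9 * Real.sqrt 2 / 10) ^ (m + 1) ≤ 1 * 10 ^ (m + 1) := by gcongr; norm_num
        _ = 10 ^ (m + 1) := one_mul _
    · have hkpow : (k : ℝ) ^ (-(((m : ℝ) + 1) - 11) / 2) ≤ 1 :=
        Real.rpow_le_one_of_one_le_of_nonpos (by exact_mod_cast hk) (by
          have : (14 : ℝ) ≤ m := by exact_mod_cast (by omega : 14 ≤ m)
          linarith)
      have hn4 : 4 / (n : ℝ) ≤ 4 := div_le_self (by norm_num) (by exact_mod_cast hn)
      calc Psi n k m * (1 + (k : ℝ) ^ (-(((m : ℝ) + 1) - 11) / 2)) * (1 + 4 / (n : ℝ))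
          ≤ 10 ^ m * 2 * 5 := by
            have := Psi_nonneg n k m
            gcongr <;> linarith
        _ = 10 ^ (m + 1) := by ring

lemma Phi_nonneg (hk : 1 ≤ k) (hp : 0 ≤ p) (m : ℕ) : 0 ≤ Phi n k p m := by
  have : (0 : ℝ) ≤ (k : ℝ) - 1 := by
    rw [sub_nonneg]; exact_mod_cast hk
  have := Psi_nonneg n k m
  unfold Phi
  positivity

lemma pStar_le (hn : 1 ≤ n) : pStar n k ≤ (k : ℝ) ^ (1 - 2 * Real.sqrt n) := by
  have : (n : ℝ) ^ (-2 : ℝ) ≤ 1 :=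
    Real.rpow_le_one_of_one_le_of_nonpos (by exact_mod_cast hn) (by norm_num)
  calc pStar n k ≤ 1 * (k : ℝ) ^ (-2 * Real.sqrt n + 1) := by
        unfold pStar; gcongr
    _ = (k : ℝ) ^ (1 - 2 * Real.sqrt n) := by rw [one_mul]; ring_nf

lemma Phi_le (hn : 1 ≤ n) (hk : 1 ≤ k) (hp : 0 ≤ p) (hps : p ≤ pStar n k) {m : ℕ} (hm : m ≤ n) :
    Phi n k p m ≤ (10 * n) ^ m *
      (k : ℝ) ^ ((m : ℝ) ^ 2 / 4 - (Real.sqrt n - 2) * m + 1 - 2 * Real.sqrt n) := by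
  have hk0 : (0 : ℝ) < k := by exact_mod_cast hk
  have hk1 : (0 : ℝ) ≤ (k : ℝ) - 1 := by rw [sub_nonneg]; exact_mod_cast hk
  have hpow : p ^ ((m : ℝ) / 2 + 1) ≤ (k : ℝ) ^ ((1 - 2 * Real.sqrt n) * ((m : ℝ) / 2 + 1)) := by
    rw [Real.rpow_mul hk0.le]
    gcongr
    exact hps.trans (pStar_le hn)
  have hfact : (m.factorial : ℝ) ≤ (n : ℝ) ^ m := by
    exact_mod_cast (Nat.factorial_le_pow m).trans (Nat.pow_le_pow_left hm m)
  have htwo : (2 : ℝ) ^ (-(m : ℝ) / 2) ≤ 1 :=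
    Real.rpow_le_one_of_one_le_of_nonpos (by norm_num) (by have := m.cast_nonneg (α := ℝ); linarith)
  calc Phi n k p m
      ≤ 10 ^ m * (k : ℝ) ^ ((1 - 2 * Real.sqrt n) * ((m : ℝ) / 2 + 1)) * (n : ℝ) ^ m * 1 *
          (k : ℝ) ^ m * (k : ℝ) ^ (((m : ℝ) ^ 2 + 2 * (m : ℝ)) / 4) := by
        have := Psi_nonneg n k m
        unfold Phi
        gcongr
        · exact Psi_le_ten_pow hn hk m
        · linarith
    _ = (10 * n) ^ m *
        (k : ℝ) ^ ((m : ℝ) ^ 2 / 4 - (Real.sqrt n - 2) * m + 1 - 2 * Real.sqrt n) := by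
      rw [← Real.rpow_natCast (k : ℝ) m, mul_one, mul_pow]
      rw [show (m : ℝ) ^ 2 / 4 - (Real.sqrt n - 2) * m + 1 - 2 * Real.sqrt n =
        (1 - 2 * Real.sqrt n) * ((m : ℝ) / 2 + 1) + m + ((m : ℝ) ^ 2 + 2 * m) / 4 by ring,
        Real.rpow_add hk0, Real.rpow_add hk0]
      ring

lemma exponent_sum_le_neg_sq_div_two {r i j l : ℝ} (hr : 60 ≤ r) (hj : 0 ≤ j) (hji : j ≤ i)
    (hi : i + 3 ≤ 2 * r) (hl : l ≤ i + j + 2) (hl3 : 3 * r < l) :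
    r ^ 2 + 4 * l + (i ^ 2 / 4 - (r - 2) * i + 1 - 2 * r) +
      (j ^ 2 / 4 - (r - 2) * j + 1 - 2 * r) ≤ -r ^ 2 / 2 := by
  nlinarith [mul_nonneg (by linarith : (0 : ℝ) ≤ 2 * r - 3 - i) (by linarith : (0 : ℝ) ≤ 2 * r - 3 - j),
    mul_nonneg (by linarith : (0 : ℝ) ≤ i + j - (3 * r - 2))
      (by linarith : (0 : ℝ) ≤ 4 * r - 6 - (i + j))]

lemma candCount_mul_Phi_mul_Phi_le (hn : 3600 ≤ n) (hk : 2 ≤ k) (hp : 0 ≤ p)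
    (hps : p ≤ pStar n k) (t d : ℕ) {ℓ i j : ℕ} (hji : j ≤ i) (hi : (i : ℝ) + 3 ≤ 2 * Real.sqrt n)
    (hl : ℓ ≤ i + j + 2) (hl3 : 3 * Real.sqrt n < ℓ) :
    (candCount n k t (ℓ, i, j, d) : ℝ) * Phi n k p i * Phi n k p j ≤
      (n : ℝ) ^ (13 * Real.sqrt n) * 2 ^ (-(n : ℝ) / 2) := by
  set r := Real.sqrt n
  have hrn : r ^ 2 = n := Real.sq_sqrt n.cast_nonneg
  have hr : 60 ≤ r := Real.le_sqrt_of_sq_le (by norm_num; exact_mod_cast hn)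
  have hn1 : (1 : ℝ) ≤ n := by exact_mod_cast (by omega : 1 ≤ n)
  have hk0 : (0 : ℝ) < k := by exact_mod_cast (by omega : 0 < k)
  have hin : i ≤ n := by exact_mod_cast (show (i : ℝ) ≤ n by nlinarith)
  have hcand : (candCount n k t (ℓ, i, j, d) : ℝ) ≤ (n : ℝ) ^ ℓ * (k : ℝ) ^ (n + 4 * ℓ) := by
    exact_mod_cast candCountIn_le hk _ t (ℓ, i, j, d)
  set E : ℕ → ℝ := fun m => (m : ℝ) ^ 2 / 4 - (r - 2) * m + 1 - 2 * r
  have hnpow : (n : ℝ) ^ ℓ * (10 * n) ^ (i + j) ≤ (n : ℝ) ^ (13 * r) := by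
    calc (n : ℝ) ^ ℓ * (10 * n) ^ (i + j) ≤ (n : ℝ) ^ ℓ * ((n : ℝ) ^ 2) ^ (i + j) := by
          gcongr; nlinarith [show (3600 : ℝ) ≤ n by exact_mod_cast hn]
      _ = (n : ℝ) ^ ((ℓ + 2 * (i + j) : ℕ) : ℝ) := by
          rw [Real.rpow_natCast, ← pow_mul, ← pow_add]
      _ ≤ (n : ℝ) ^ (13 * r) := by
          refine Real.rpow_le_rpow_of_exponent_le hn1 ?_
          have : (j : ℝ) ≤ i := by exact_mod_cast hji
          have : (ℓ : ℝ) ≤ i + j + 2 := by exact_mod_cast hl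
          push_cast
          linarith
  have hkpow : (k : ℝ) ^ ((n + 4 * ℓ : ℕ) + E i + E j) ≤ 2 ^ (-(n : ℝ) / 2) := by
    have hE : ((n + 4 * ℓ : ℕ) : ℝ) + E i + E j ≤ -(n : ℝ) / 2 := by
      push_cast
      rw [← hrn]
      exact exponent_sum_le_neg_sq_div_two hr j.cast_nonneg (by exact_mod_cast hji) hi
        (by exact_mod_cast hl) hl3
    calc (k : ℝ) ^ ((n + 4 * ℓ : ℕ) + E i + E j) ≤ (k : ℝ) ^ (-(n : ℝ) / 2) :=
          Real.rpow_le_rpow_of_exponent_le (by exact_mod_cast (by omega : 1 ≤ k)) hE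
      _ ≤ 2 ^ (-(n : ℝ) / 2) :=
          Real.rpow_le_rpow_of_nonpos (by norm_num) (by exact_mod_cast hk) (by linarith)
  calc (candCount n k t (ℓ, i, j, d) : ℝ) * Phi n k p i * Phi n k p j
      ≤ ((n : ℝ) ^ ℓ * (k : ℝ) ^ (n + 4 * ℓ)) * ((10 * n) ^ i * (k : ℝ) ^ E i) *
          ((10 * n) ^ j * (k : ℝ) ^ E j) := by
        have := Phi_nonneg (n := n) (k := k) (by omega) hp i
        have := Phi_nonneg (n := n) (k := k) (by omega) hp j
        gcongr
        · exact Phi_le (by omega) (by omega) hp hps hin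
        · exact Phi_le (by omega) (by omega) hp hps (hji.trans hin)
    _ = ((n : ℝ) ^ ℓ * (10 * n) ^ (i + j)) * (k : ℝ) ^ ((n + 4 * ℓ : ℕ) + E i + E j) := by
        rw [Real.rpow_add hk0, Real.rpow_add hk0, Real.rpow_natCast]
        ring
    _ ≤ (n : ℝ) ^ (13 * r) * 2 ^ (-(n : ℝ) / 2) := by gcongr

lemma card_indexSet_le (m t : ℕ) : (indexSet m t).card ≤ 3 * (m + 1) ^ 3 := by
  refine (Finset.card_filter_le _ _).trans_eq ?_
  simp only [Finset.card_product, Finset.card_range]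
  ring

lemma abs_sum_candCount_mul_Phi_mul_Phi_le (hn : 3600 ≤ n) (hk : 2 ≤ k)
    (hp : 0 ≤ p) (hps : p ≤ pStar n k) :
    |∑ q ∈ (indexSet n (⌊2 * Real.sqrt n⌋₊ - 2)).filter (fun q => 3 * Real.sqrt n < (q.1 : ℝ)),
        (candCount n k (⌊2 * Real.sqrt n⌋₊ - 2) q : ℝ) * Phi n k p q.2.1 * Phi n k p q.2.2.1| ≤
      (n : ℝ) ^ (14 * Real.sqrt n) * 2 ^ (-(n : ℝ) / 2) := by
  set r := Real.sqrt n
  set t := ⌊2 * r⌋₊ - 2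
  set F := (indexSet n t).filter (fun q => 3 * r < (q.1 : ℝ))
  have hr : 60 ≤ r := Real.le_sqrt_of_sq_le (by norm_num; exact_mod_cast hn)
  have hn1 : (1 : ℝ) ≤ n := by exact_mod_cast (by omega : 1 ≤ n)
  have hterm : ∀ q ∈ F, |(candCount n k t q : ℝ) * Phi n k p q.2.1 * Phi n k p q.2.2.1| ≤
      (n : ℝ) ^ (13 * r) * 2 ^ (-(n : ℝ) / 2) := by
    rintro ⟨ℓ, i, j, d⟩ hq
    simp only [F, indexSet, Finset.mem_filter, Finset.mem_product, Finset.mem_range] at hq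
    obtain ⟨⟨⟨-, -, -, hd⟩, -, hl, hji, hit, -⟩, hl3⟩ := hq
    have hi : (i : ℝ) + 3 ≤ 2 * r := by
      have : ((i + 3 : ℕ) : ℝ) ≤ ⌊2 * r⌋₊ := by exact_mod_cast (by omega : i + 3 ≤ ⌊2 * r⌋₊)
      push_cast at this
      linarith [Nat.floor_le (by positivity : 0 ≤ 2 * r)]
    rw [abs_of_nonneg (mul_nonneg (mul_nonneg (Nat.cast_nonneg _) (Phi_nonneg (by omega) hp i))
      (Phi_nonneg (by omega) hp j))]
    exact candCount_mul_Phi_mul_Phi_le hn hk hp hps t d hji hi (by omega) hl3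
  have hcard : (F.card : ℝ) ≤ (n : ℝ) ^ r := by
    have : F.card ≤ n ^ 4 :=
      calc F.card ≤ 3 * (n + 1) ^ 3 := (Finset.card_filter_le _ _).trans (card_indexSet_le n t)
        _ ≤ 3 * (2 * n) ^ 3 := by gcongr; omega
        _ = 24 * n ^ 3 := by ring
        _ ≤ n * n ^ 3 := by gcongr; omega
        _ = n ^ 4 := by ring
    calc (F.card : ℝ) ≤ (n : ℝ) ^ ((4 : ℕ) : ℝ) := by rw [Real.rpow_natCast]; exact_mod_cast this
      _ ≤ (n : ℝ) ^ r := Real.rpow_le_rpow_of_exponent_le hn1 (by push_cast; linarith)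
  calc _ ≤ ∑ q ∈ F, |(candCount n k t q : ℝ) * Phi n k p q.2.1 * Phi n k p q.2.2.1| :=
        Finset.abs_sum_le_sum_abs _ _
    _ ≤ F.card * ((n : ℝ) ^ (13 * r) * 2 ^ (-(n : ℝ) / 2)) := by
        simpa using Finset.sum_le_card_nsmul _ _ _ hterm
    _ ≤ (n : ℝ) ^ r * ((n : ℝ) ^ (13 * r) * 2 ^ (-(n : ℝ) / 2)) := by gcongr
    _ = (n : ℝ) ^ (14 * r) * 2 ^ (-(n : ℝ) / 2) := by
        rw [← mul_assoc, ← Real.rpow_add (by linarith)]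
        ring_nf

end Estimates

lemma tendsto_rpow_mul_sqrt_mul_two_rpow_neg :
    Tendsto (fun n : ℕ => (n : ℝ) ^ (14 * Real.sqrt n) * 2 ^ (-(n : ℝ) / 2)) atTop (𝓝 0) := by
  have hlog : Tendsto (fun x : ℝ => Real.log x / Real.sqrt x) atTop (𝓝 0) := by
    simpa [Real.sqrt_eq_rpow] using
      (isLittleO_log_rpow_atTop (by norm_num : (0 : ℝ) < 1 / 2)).tendsto_div_nhds_zero
  have hexp : Tendsto (fun x : ℝ => x * (14 * (Real.log x / Real.sqrt x) - Real.log 2 / 2))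
      atTop atBot :=
    tendsto_id.atTop_mul_neg (by simp [Real.log_pos]) ((hlog.const_mul 14).sub_const _)
  refine ((Real.tendsto_exp_atBot.comp hexp).comp tendsto_natCast_atTop_atTop).congr' ?_
  filter_upwards [eventually_gt_atTop 0] with n hn
  have hn0 : (0 : ℝ) < n := by exact_mod_cast hn
  rw [Function.comp_apply, Function.comp_apply, Real.rpow_def_of_pos hn0,
    Real.rpow_def_of_pos two_pos, ← Real.exp_add]
  congr 1
  field_simp
  linear_combination (-28 * Real.log n) * Real.sq_sqrt hn0.le

theorem stmt11 :
    ∀ ε : ℝ, 0 < ε → ∃ N : ℕ, ∀ n : ℕ, N ≤ n → ∀ k : ℕ, 2 ≤ k →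
      (k : ℝ) ≤ (2 : ℝ) ^ Real.sqrt n → ∀ p : ℝ, 0 < p → p ≤ pStar n k →
        |∑ q ∈ (indexSet n (⌊2 * Real.sqrt n⌋₊ - 2)).filter
            (fun q => 3 * Real.sqrt n < (q.1 : ℝ)),
          (candCount n k (⌊2 * Real.sqrt n⌋₊ - 2) q : ℝ) *
            Phi n k p q.2.1 * Phi n k p q.2.2.1| ≤ ε := by
  intro ε hε
  obtain ⟨N, hN⟩ := eventually_atTop.1
    ((tendsto_rpow_mul_sqrt_mul_two_rpow_neg.eventually (ge_mem_nhds hε)).and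
      (eventually_ge_atTop 3600))
  refine ⟨N, fun n hn k hk _ p hp hps => ?_⟩
  exact (abs_sum_candCount_mul_Phi_mul_Phi_le (hN n hn).2 hk hp.le hps).trans (hN n hn).1
end

section
/- In the n-dimensional Hamming graph G = □_{i=1}^n K_k, for 1 ≤ ℓ ≤ ⌊n/2⌋ and any sequentially spanning sequence (v_0,…,v_{ℓ−1}) of length ℓ−1, the number C_ℓ of vertices w ∈ V(G) such that (v_0,…,v_{ℓ−1},w) is a sequentially spanning sequence of length ℓ equals C(n−2ℓ+2, 2) · (k−1)² · k^{2ℓ−2} (independently of the chosen sequence), and consequently for 0 ≤ ℓ ≤ ⌊n/2⌋ the number of sequentially spanning sequences of length ℓ is |S_ℓ| = k^n · Π_{j=1}^{ℓ} C_j = (n! / (n−2ℓ)!) · (k−1)^{2ℓ} · 2^{−ℓ} · k^{n+ℓ²−ℓ}, where C(a,b) denotes the binomial coefficient. -/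
open scoped Classical

/-!
The bootstrap closure of the first `ℓ` vertices of a sequentially spanning sequence is a
subcube of dimension `2(ℓ - 1)`. A vertex `w` at distance two from a subcube violates exactly two
of its fixed coordinates, and the closure of the subcube and `w` is the subcube with these two
coordinates freed: a common neighbour of `w` and of its nearest point in the subcube lies at
distance one from the subcube, and a subcube together with a vertex at distance one spans the
subcube with one more free coordinate. So the admissible next vertices are those violating
exactly two of the `n - 2ℓ + 2` fixed coordinates, which gives `C_ℓ`, and `|S_ℓ|` is the product
of the `C_j` with the `k^n` choices of `v_0`.
-/
namespace HammingBootstrap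

open Function Finset

section Bootstrap

variable {V : Type*} (G : SimpleGraph V)

def IsBootClosed (C : Set V) : Prop :=
  ∀ ⦃x u w : V⦄, u ≠ w → G.Adj x u → G.Adj x w → u ∈ C → w ∈ C → x ∈ C

variable {G}

lemma bootIter_mono (A : Set V) : Monotone (bootIter G A) :=
  monotone_nat_of_le_succ fun _ => Set.subset_union_left

lemma subset_bootClosure (A : Set V) : A ⊆ bootClosure G A :=
  Set.subset_iUnion (bootIter G A) 0

lemma isBootClosed_bootClosure (A : Set V) : IsBootClosed G (bootClosure G A) := by
  intro x u w huw hxu hxw hu hw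
  obtain ⟨i, hi⟩ := Set.mem_iUnion.mp hu
  obtain ⟨j, hj⟩ := Set.mem_iUnion.mp hw
  refine Set.mem_iUnion.mpr ⟨max i j + 1, Or.inr ⟨u, w, huw, hxu, hxw, ?_, ?_⟩⟩
  · exact bootIter_mono A (le_max_left i j) hi
  · exact bootIter_mono A (le_max_right i j) hj

lemma bootClosure_subset {A C : Set V} (hAC : A ⊆ C) (hC : IsBootClosed G C) :
    bootClosure G A ⊆ C := by
  refine Set.iUnion_subset fun j => ?_
  induction j with
  | zero => exact hAC
  | succ j ih =>
    rintro x (hx | ⟨u, w, huw, hxu, hxw, hu, hw⟩)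
    exacts [ih hx, hC huw hxu hxw (ih hu) (ih hw)]

lemma IsBootClosed.bootClosure_eq {C : Set V} (hC : IsBootClosed G C) : bootClosure G C = C :=
  (bootClosure_subset subset_rfl hC).antisymm (subset_bootClosure C)

lemma bootClosure_mono {A B : Set V} (h : A ⊆ B) : bootClosure G A ⊆ bootClosure G B :=
  bootClosure_subset (h.trans (subset_bootClosure B)) (isBootClosed_bootClosure B)

lemma bootClosure_bootClosure_union (A B : Set V) :
    bootClosure G (bootClosure G A ∪ B) = bootClosure G (A ∪ B) := by
  refine (bootClosure_subset (Set.union_subset ?_ ?_) (isBootClosed_bootClosure _)).antisymm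
    (bootClosure_mono (Set.union_subset_union_left B (subset_bootClosure A)))
  · exact bootClosure_mono Set.subset_union_left
  · exact Set.subset_union_right.trans (subset_bootClosure _)

end Bootstrap

section HammingGraph

variable {n k : ℕ}

lemma hamming_adj_iff {v w : Fin n → Fin k} : (hamming n k).Adj v w ↔ hammingDist v w = 1 :=
  Iff.rfl

lemma hammingDist_update_add_one {v w : Fin n → Fin k} {i : Fin n} (h : v i ≠ w i) :
    hammingDist (update v i (w i)) w + 1 = hammingDist v w := by
  have hfilter : ({t | update v i (w i) t ≠ w t} : Finset (Fin n)) =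
      ({t | v t ≠ w t} : Finset (Fin n)).erase i := by
    ext t
    rcases eq_or_ne t i with rfl | ht <;> simp [*]
  rw [hammingDist, hammingDist, hfilter, card_erase_add_one (by simpa using h)]

lemma hamming_adj_update {v : Fin n → Fin k} {i : Fin n} {c : Fin k} (h : c ≠ v i) :
    (hamming n k).Adj v (update v i c) := by
  rw [hamming_adj_iff, hammingDist_comm, ← hammingDist_update_add_one (w := v) (i := i)
    (by simpa using h)]
  simp

lemma eq_update_of_hamming_adj {v w : Fin n → Fin k} (h : (hamming n k).Adj v w) {i : Fin n}
    (hi : v i ≠ w i) : w = update v i (w i) := by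
  have := hammingDist_update_add_one hi
  rw [← hamming_adj_iff.mp h, Nat.add_eq_right, hammingDist_eq_zero] at this
  exact this.symm

lemma hammingDist_le_length {v w : Fin n → Fin k} (p : (hamming n k).Walk v w) :
    hammingDist v w ≤ p.length := by
  induction p with
  | nil => simp
  | cons h p ih =>
    rw [SimpleGraph.Walk.length_cons]
    have := hammingDist_triangle _ _ _ |>.trans (add_le_add (hamming_adj_iff.mp h).le ih)
    omega

lemma exists_walk_length_eq_hammingDist (v w : Fin n → Fin k) :
    ∃ p : (hamming n k).Walk v w, p.length = hammingDist v w := by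
  generalize hd : hammingDist v w = d
  induction d generalizing v with
  | zero => obtain rfl := hammingDist_eq_zero.mp hd; exact ⟨.nil, rfl⟩
  | succ d ih =>
    obtain ⟨i, hi⟩ := Function.ne_iff.mp (hammingDist_pos.mp (by omega) : v ≠ w)
    obtain ⟨p, hp⟩ := ih (update v i (w i)) (by have := hammingDist_update_add_one hi; omega)
    exact ⟨.cons (hamming_adj_update (Ne.symm hi)) p, by simp [hp]⟩

lemma hamming_dist_eq_hammingDist (v w : Fin n → Fin k) :
    (hamming n k).dist v w = hammingDist v w := by
  obtain ⟨p, hp⟩ := exists_walk_length_eq_hammingDist v w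
  obtain ⟨q, hq⟩ := SimpleGraph.Reachable.exists_walk_length_eq_dist ⟨p⟩
  exact le_antisymm (hp ▸ SimpleGraph.dist_le p) (hq ▸ hammingDist_le_length q)

end HammingGraph

section Subcube

variable {n k : ℕ}

def violations (S : Fin n → Option (Fin k)) (w : Fin n → Fin k) : Finset (Fin n) :=
  {t | ∃ a, S t = some a ∧ w t ≠ a}

lemma mem_violations {S : Fin n → Option (Fin k)} {w : Fin n → Fin k} {t : Fin n} :
    t ∈ violations S w ↔ ∃ a, S t = some a ∧ w t ≠ a := by
  simp [violations]

lemma mem_projSet_update_none {S : Fin n → Option (Fin k)} {i : Fin n} {x : Fin n → Fin k} :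
    x ∈ projSet (update S i none) ↔ ∀ t ≠ i, ∀ a, S t = some a → x t = a := by
  refine forall_congr' fun t => ?_
  rcases eq_or_ne t i with rfl | ht <;> simp [*]

lemma projSet_subset_projSet_update_none (S : Fin n → Option (Fin k)) (i : Fin n) :
    projSet S ⊆ projSet (update S i none) :=
  fun _ hx => mem_projSet_update_none.mpr fun t _ => hx t

lemma update_mem_projSet {S : Fin n → Option (Fin k)} {x : Fin n → Fin k} (hx : x ∈ projSet S)
    {i : Fin n} (hi : S i = none) (c : Fin k) : update x i c ∈ projSet S := by
  intro t a ht
  rw [update_of_ne (by rintro rfl; simp_all)]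
  exact hx t a ht

lemma update_mem_projSet_iff {S : Fin n → Option (Fin k)} {i : Fin n} {a : Fin k}
    (hSi : S i = some a) {x : Fin n → Fin k} :
    update x i a ∈ projSet S ↔ x ∈ projSet (update S i none) := by
  rw [mem_projSet_update_none]
  refine forall_congr' fun t => ?_
  rcases eq_or_ne t i with rfl | ht <;> simp [*]

lemma projSet_some (x : Fin n → Fin k) : projSet (fun t => some (x t)) = {x} := by
  ext y
  simp [projSet, funext_iff, eq_comm]

lemma isBootClosed_projSet (S : Fin n → Option (Fin k)) :
    IsBootClosed (hamming n k) (projSet S) := by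
  intro x u w huw hxu hxw hu hw
  by_contra hx
  obtain ⟨t, a, hSt, hxt⟩ : ∃ t a, S t = some a ∧ x t ≠ a := by
    simpa [projSet] using hx
  have hu' := eq_update_of_hamming_adj hxu (i := t) (by rwa [hu t a hSt])
  have hw' := eq_update_of_hamming_adj hxw (i := t) (by rwa [hw t a hSt])
  exact huw (by rw [hu', hw', hu t a hSt, hw t a hSt])

lemma setDist_projSet_singleton (S : Fin n → Option (Fin k)) (w : Fin n → Fin k) :
    setDist (hamming n k) (projSet S) {w} = #(violations S w) := by
  set p : Fin n → Fin k := fun t => (S t).getD (w t)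
  have hp : p ∈ projSet S := fun t a ht => by simp [p, ht]
  have hpw : hammingDist p w = #(violations S w) := by
    unfold hammingDist violations
    congr 1
    ext t
    cases h : S t <;> simp [p, h, eq_comm]
  refine le_antisymm (Nat.sInf_le ⟨p, hp, w, rfl, by rw [hamming_dist_eq_hammingDist, hpw]⟩) ?_
  refine le_csInf ⟨_, p, hp, w, rfl, rfl⟩ ?_
  rintro _ ⟨u, hu, _, rfl, rfl⟩
  rw [hamming_dist_eq_hammingDist]
  refine card_le_card fun t ht => ?_
  obtain ⟨a, ha, hwa⟩ := mem_violations.mp ht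
  simpa [hu t a ha] using hwa.symm

lemma projDim_update_none {S : Fin n → Option (Fin k)} {i : Fin n} (hi : S i ≠ none) :
    projDim (update S i none) = projDim S + 1 := by
  have : univ.filter (fun t => update S i none t = none) =
      insert i (univ.filter fun t => S t = none) := by
    ext t
    rcases eq_or_ne t i with rfl | ht <;> simp [*]
  rw [projDim, projDim, this, card_insert_of_notMem (by simpa using hi)]

end Subcube

section Spreading

variable {n k : ℕ}

lemma projSet_update_none_subset {C : Set (Fin n → Fin k)} (hC : IsBootClosed (hamming n k) C)
    {S : Fin n → Option (Fin k)} (hS : projSet S ⊆ C) {i : Fin n} {a : Fin k} (hSi : S i = some a)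
    {y : Fin n → Fin k} (hyC : y ∈ C) (hy : y ∈ projSet (update S i none)) (hya : y i ≠ a) :
    projSet (update S i none) ⊆ C := by
  have base : ∀ x ∈ projSet (update S i none), update x i a ∈ C :=
    fun x hx => hS ((update_mem_projSet_iff hSi).mpr hx)
  -- the layer `x i = y i` fills up by induction on the Hamming distance to `y`
  have layer : ∀ d, ∀ x ∈ projSet (update S i none), x i = y i → hammingDist x y = d → x ∈ C := by
    intro d
    induction d with
    | zero => intro x _ _ hd; rwa [hammingDist_eq_zero.mp hd]
    | succ d ih =>
      intro x hx hxi hd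
      obtain ⟨m, hm⟩ := Function.ne_iff.mp (hammingDist_pos.mp (by omega) : x ≠ y)
      have hmi : m ≠ i := by rintro rfl; exact hm hxi
      have hSm : update S i none m = none := by
        by_contra h
        obtain ⟨b, hb⟩ := Option.ne_none_iff_exists'.mp h
        exact hm ((hx m b hb).trans (hy m b hb).symm)
      refine hC (u := update x i a) (w := update x m (y m)) ?_ (hamming_adj_update ?_)
        (hamming_adj_update (Ne.symm hm)) (base x hx) ?_
      · exact fun h => hya (by simpa [update_of_ne hmi.symm, hxi] using (congrFun h i).symm)
      · rw [hxi]; exact hya.symm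
      · refine ih _ (update_mem_projSet hx hSm _) (by simp [update_of_ne hmi.symm, hxi]) ?_
        have := hammingDist_update_add_one hm
        omega
  intro x hx
  by_cases hxa : x i = a
  · simpa [← hxa] using base x hx
  by_cases hxy : x i = y i
  · exact layer _ x hx hxy rfl
  have hSi' : update S i none i = none := update_self ..
  refine hC (u := update x i a) (w := update x i (y i)) ?_ (hamming_adj_update (Ne.symm hxa))
    (hamming_adj_update (Ne.symm hxy)) (base x hx) ?_
  · exact fun h => hya (by simpa using (congrFun h i).symm)
  · exact layer _ _ (update_mem_projSet hx hSi' _) (update_self ..) rfl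

lemma bootClosure_projSet_union_singleton {S : Fin n → Option (Fin k)} {w : Fin n → Fin k}
    {i j : Fin n} (hij : i ≠ j) (hw : violations S w = {i, j}) :
    bootClosure (hamming n k) (projSet S ∪ {w}) = projSet (update (update S i none) j none) := by
  obtain ⟨a, hSi, hwa⟩ := mem_violations.mp (hw ▸ mem_insert_self i {j})
  obtain ⟨b, hSj, hwb⟩ := mem_violations.mp (hw ▸ mem_insert_of_mem (mem_singleton_self j))
  have hw' : ∀ t ≠ i, t ≠ j → ∀ c, S t = some c → w t = c := by
    intro t hti htj c hc
    by_contra h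
    have := hw ▸ mem_violations.mpr ⟨c, hc, h⟩
    simp_all
  have hwS' : w ∈ projSet (update (update S i none) j none) := by
    rw [mem_projSet_update_none]
    intro t htj c hc
    rcases eq_or_ne t i with rfl | hti
    · simp at hc
    · exact hw' t hti htj c (by simpa [update_of_ne hti] using hc)
  set C := bootClosure (hamming n k) (projSet S ∪ {w})
  have hC := isBootClosed_bootClosure (G := hamming n k) (projSet S ∪ {w})
  refine (bootClosure_subset (Set.union_subset ?_ ?_) (isBootClosed_projSet _)).antisymm ?_
  · exact (projSet_subset_projSet_update_none _ i).trans (projSet_subset_projSet_update_none _ j)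
  · simpa using hwS'
  have hSC : projSet S ⊆ C := Set.subset_union_left.trans (subset_bootClosure _)
  have hwC : w ∈ C := subset_bootClosure _ (Or.inr rfl)
  -- `update w j b` is a common neighbour of `w` and of its nearest point in the subcube
  set p : Fin n → Fin k := update (update w j b) i a
  have hp : p ∈ projSet S := by
    intro t c hc
    rcases eq_or_ne t i with rfl | hti
    · simp_all [p]
    rcases eq_or_ne t j with rfl | htj
    · simp_all [p]
    · simp [p, update_of_ne hti, update_of_ne htj, hw' t hti htj c hc]
  have hq : update w j b ∈ C := by
    refine hC (u := w) (w := p) ?_ (hamming_adj_update hwb.symm).symm ?_ hwC (hSC hp)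
    · intro h
      exact hwa (by simpa [p] using congrFun h i)
    · exact hamming_adj_update (by simpa [update_of_ne hij] using hwa.symm)
  have hS₁ : projSet (update S i none) ⊆ C := by
    refine projSet_update_none_subset hC hSC hSi hq ?_ (by simpa [update_of_ne hij] using hwa)
    rw [mem_projSet_update_none]
    intro t hti c hc
    rcases eq_or_ne t j with rfl | htj
    · simp_all
    · simpa [update_of_ne htj] using hw' t hti htj c hc
  exact projSet_update_none_subset hC hS₁ (by simpa [update_of_ne hij.symm] using hSj) hwC hwS' hwb

end Spreading

section Sequences

variable {V : Type*} {G : SimpleGraph V}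

lemma image_snoc_setOf_lt {m c : ℕ} (v : Fin m → V) (w : V) (hc : c ≤ m) :
    (Fin.snoc v w : Fin (m + 1) → V) '' {j | (j : ℕ) < c} = v '' {j | (j : ℕ) < c} := by
  ext x
  constructor
  · rintro ⟨j, hj : (j : ℕ) < c, rfl⟩
    refine ⟨⟨j, by omega⟩, hj, ?_⟩
    exact (Fin.snoc_castSucc (α := fun _ => V) w v ⟨j, by omega⟩).symm
  · rintro ⟨j, hj, rfl⟩
    exact ⟨j.castSucc, hj, Fin.snoc_castSucc ..⟩

lemma seqSpanSeq_snoc_iff {m : ℕ} (v : Fin m → V) (w : V) :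
    SeqSpanSeq G (m + 1) (Fin.snoc v w) ↔
      SeqSpanSeq G m v ∧ (0 < m → setDist G (bootClosure G (Set.range v)) {w} = 2) := by
  have hrange : v '' {j | (j : ℕ) < m} = Set.range v := by
    rw [← Set.image_univ]
    congr
    exact Set.eq_univ_of_forall fun j => j.isLt
  unfold SeqSpanSeq
  rw [Fin.forall_fin_succ']
  simp only [Fin.val_castSucc, Fin.snoc_castSucc, Fin.val_last, Fin.snoc_last,
    image_snoc_setOf_lt v w le_rfl, hrange]
  refine and_congr (forall_congr' fun i => ?_) Iff.rfl
  rw [image_snoc_setOf_lt v w i.isLt.le]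

variable (G) in
def seqSpanSeqSnocEquiv (m : ℕ) :
    {u : Fin (m + 1) → V // SeqSpanSeq G (m + 1) u} ≃
      Σ v : {v : Fin m → V // SeqSpanSeq G m v},
        {w : V // SeqSpanSeq G (m + 1) (Fin.snoc v.1 w)} where
  toFun u :=
    have hu : SeqSpanSeq G (m + 1) (Fin.snoc (Fin.init u.1) (u.1 (Fin.last m))) := by
      rw [Fin.snoc_init_self]; exact u.2
    ⟨⟨Fin.init u.1, ((seqSpanSeq_snoc_iff _ _).mp hu).1⟩, ⟨u.1 (Fin.last m), hu⟩⟩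
  invFun p := ⟨Fin.snoc p.1.1 p.2.1, p.2.2⟩
  left_inv u := Subtype.ext (Fin.snoc_init_self u.1)
  right_inv p := Sigma.subtype_ext (Subtype.ext (Fin.init_snoc (α := fun _ => V) _ _))
    (Fin.snoc_last (α := fun _ => V) _ _)

end Sequences

section Structure

variable {n k : ℕ}

lemma exists_bootClosure_range_eq_projSet (m : ℕ) (v : Fin (m + 1) → Fin n → Fin k)
    (hv : SeqSpanSeq (hamming n k) (m + 1) v) :
    ∃ S, bootClosure (hamming n k) (Set.range v) = projSet S ∧ projDim S = 2 * m := by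
  induction m with
  | zero =>
    refine ⟨fun t => some (v 0 t), ?_, by simp [projDim]⟩
    have hrange : Set.range v = projSet fun t => some (v 0 t) := by
      rw [projSet_some]
      ext x
      simp [Fin.exists_fin_one, eq_comm]
    rw [hrange, (isBootClosed_projSet _).bootClosure_eq]
  | succ m ih =>
    rw [← Fin.snoc_init_self v] at hv ⊢
    obtain ⟨hinit, hdist⟩ := (seqSpanSeq_snoc_iff _ _).mp hv
    obtain ⟨S, hS, hdim⟩ := ih _ hinit
    rw [hS, setDist_projSet_singleton] at hdist
    obtain ⟨a, b, hab, hviol⟩ := card_eq_two.mp (hdist m.succ_pos)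
    obtain ⟨za, hSa, -⟩ := mem_violations.mp (hviol ▸ mem_insert_self a {b})
    obtain ⟨zb, hSb, -⟩ := mem_violations.mp (hviol ▸ mem_insert_of_mem (mem_singleton_self b))
    refine ⟨update (update S a none) b none, ?_, ?_⟩
    · rw [Fin.range_snoc, Set.insert_eq, Set.union_comm, ← bootClosure_bootClosure_union, hS,
        bootClosure_projSet_union_singleton hab hviol]
    · rw [projDim_update_none (by simp [update_of_ne hab.symm, hSb]),
        projDim_update_none (by simp [hSa]), hdim]
      ring

end Structure

section Counting

lemma card_hammingDist_eq {ι β : Type*} [Fintype ι] [DecidableEq ι] [Fintype β] [DecidableEq β]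
    (z : ι → β) (r : ℕ) :
    Fintype.card {u : ι → β // hammingDist u z = r} =
      (Fintype.card ι).choose r * (Fintype.card β - 1) ^ r := by
  rw [Fintype.card_subtype]
  have hmaps : ∀ u ∈ univ.filter fun u : ι → β => hammingDist u z = r,
      univ.filter (fun t => u t ≠ z t) ∈ (univ : Finset ι).powersetCard r :=
    fun u hu => mem_powersetCard.mpr ⟨subset_univ _, (mem_filter.mp hu).2⟩
  rw [card_eq_sum_card_fiberwise hmaps]
  have hfiber : ∀ E ∈ (univ : Finset ι).powersetCard r,
      #{u ∈ univ.filter (fun u : ι → β => hammingDist u z = r) |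
        univ.filter (fun t => u t ≠ z t) = E} = (Fintype.card β - 1) ^ r := by
    intro E hE
    have hfib : {u ∈ univ.filter (fun u : ι → β => hammingDist u z = r) |
        univ.filter (fun t => u t ≠ z t) = E} =
        Fintype.piFinset fun t => if t ∈ E then univ.erase (z t) else {z t} := by
      ext u
      simp only [mem_filter, mem_univ, true_and, Fintype.mem_piFinset]
      constructor
      · rintro ⟨-, rfl⟩ t
        by_cases h : u t = z t <;> simp [h]
      · intro hu
        have hE' : univ.filter (fun t => u t ≠ z t) = E := by
          ext t
          have := hu t
          by_cases ht : t ∈ E <;> simp_all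
        exact ⟨by rw [hammingDist, hE', (mem_powersetCard.mp hE).2], hE'⟩
    rw [hfib, Fintype.card_piFinset, ← (mem_powersetCard.mp hE).2, ← prod_const]
    simp [apply_ite card, prod_ite_mem]
  rw [sum_congr rfl hfiber, sum_const, card_powersetCard, card_univ, smul_eq_mul]

variable {n k : ℕ}

lemma card_violations_eq (S : Fin n → Option (Fin k)) (r : ℕ) :
    Nat.card {w : Fin n → Fin k // #(violations S w) = r} =
      (n - projDim S).choose r * (k - 1) ^ r * k ^ projDim S := by
  let z : {t // (S t).isSome} → Fin k := fun t => (S t).get t.2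
  have hviol : ∀ w : Fin n → Fin k,
      #(violations S w) = hammingDist (fun t : {t // (S t).isSome} => w t) z := by
    intro w
    rw [hammingDist, ← card_map (Function.Embedding.subtype _)]
    congr 1
    ext t
    cases h : S t <;> simp [violations, z, h]
  have hfree : Fintype.card {t // ¬(S t).isSome} = projDim S := by
    simp [projDim, Fintype.card_subtype]
  have hfixed : Fintype.card {t // (S t).isSome} = n - projDim S := by
    have := Fintype.card_subtype_compl fun t => (S t).isSome
    have := Fintype.card_subtype_le fun t => (S t).isSome
    simp only [Fintype.card_fin] at *
    omega
  calc Nat.card {w : Fin n → Fin k // #(violations S w) = r}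
      = Nat.card {s : ({t // (S t).isSome} → Fin k) × ({t // ¬(S t).isSome} → Fin k) //
          hammingDist s.1 z = r} :=
        Nat.card_congr ((Equiv.subtypeEquivRight fun w => by rw [hviol]; rfl).trans
          ((Equiv.piEquivPiSubtypeProd _ _).subtypeEquiv fun _ => Iff.rfl))
    _ = Nat.card ({u // hammingDist u z = r} × ({t // ¬(S t).isSome} → Fin k)) :=
        Nat.card_congr (Equiv.prodSubtypeFstEquivSubtypeProd (p := fun u => hammingDist u z = r))
    _ = _ := by
      rw [Nat.card_prod, Nat.card_eq_fintype_card, card_hammingDist_eq, Nat.card_eq_fintype_card,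
        Fintype.card_fun, hfixed, hfree, Fintype.card_fin]

end Counting

section SeqCount

variable {n k : ℕ}

lemma seqCount_one : seqCount n k 1 = k ^ n := by
  have hall : ∀ v, SeqSpanSeq (hamming n k) 1 v := fun _ i hi => absurd i.isLt (by omega)
  rw [seqCount, Nat.card_congr (Equiv.subtypeUnivEquiv hall)]
  simp

lemma seqCount_succ (m C : ℕ)
    (hC : ∀ v, SeqSpanSeq (hamming n k) m v →
      Nat.card {w // SeqSpanSeq (hamming n k) (m + 1) (Fin.snoc v w)} = C) :
    seqCount n k (m + 1) = seqCount n k m * C := by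
  rw [seqCount, Nat.card_congr (seqSpanSeqSnocEquiv _ m), Nat.card_sigma]
  simp only [hC _ (Subtype.property _), sum_const, card_univ, smul_eq_mul, seqCount,
    Nat.card_eq_fintype_card]

lemma card_snoc_seqSpanSeq {ℓ : ℕ} (hℓ : 1 ≤ ℓ) (hℓn : 2 * ℓ ≤ n) (v : Fin ℓ → Fin n → Fin k)
    (hv : SeqSpanSeq (hamming n k) ℓ v) :
    Nat.card {w // SeqSpanSeq (hamming n k) (ℓ + 1) (Fin.snoc v w)} =
      (n - 2 * ℓ + 2).choose 2 * (k - 1) ^ 2 * k ^ (2 * ℓ - 2) := by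
  obtain ⟨m, rfl⟩ : ∃ m, ℓ = m + 1 := ⟨ℓ - 1, by omega⟩
  obtain ⟨S, hS, hdim⟩ := exists_bootClosure_range_eq_projSet m v hv
  calc Nat.card {w // SeqSpanSeq (hamming n k) (m + 1 + 1) (Fin.snoc v w)}
      = Nat.card {w // #(violations S w) = 2} := by
        refine Nat.card_congr (Equiv.subtypeEquivRight fun w => ?_)
        simp [seqSpanSeq_snoc_iff, hv, hS, setDist_projSet_singleton]
    _ = _ := by
        rw [card_violations_eq, hdim]
        congr 3
        omega

lemma seqCount_succ_eq_prod (hk : 1 ≤ k) {ℓ : ℕ} (h : 2 * ℓ ≤ n) :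
    (seqCount n k (ℓ + 1) : ℝ) = (k : ℝ) ^ n * ∏ j ∈ Icc 1 ℓ,
      ((n - 2 * j + 2).choose 2 * ((k : ℝ) - 1) ^ 2 * (k : ℝ) ^ (2 * j - 2)) := by
  induction ℓ with
  | zero => simp [seqCount_one]
  | succ ℓ ih =>
    rw [seqCount_succ _ _ fun v hv => card_snoc_seqSpanSeq (by omega) h v hv, Nat.cast_mul,
      ih (by omega), prod_Icc_succ_top (by omega)]
    push_cast [Nat.cast_sub hk]
    ring

end SeqCount

section ClosedForm

lemma prod_choose_two_mul_factorial {n ℓ : ℕ} (h : 2 * ℓ ≤ n) :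
    (∏ j ∈ Icc 1 ℓ, (n - 2 * j + 2).choose 2) * 2 ^ ℓ * (n - 2 * ℓ).factorial = n.factorial := by
  induction ℓ with
  | zero => simp
  | succ ℓ ih =>
    have hchoose := Nat.choose_mul_factorial_mul_factorial (show 2 ≤ n - 2 * ℓ by omega)
    rw [show n - 2 * ℓ - 2 = n - 2 * (ℓ + 1) by omega, Nat.factorial_two] at hchoose
    rw [prod_Icc_succ_top (by omega), show n - 2 * (ℓ + 1) + 2 = n - 2 * ℓ by omega,
      ← ih (by omega), ← hchoose]
    ring

lemma sum_Icc_two_mul_sub_two (ℓ : ℕ) : ∑ j ∈ Icc 1 ℓ, (2 * j - 2) = ℓ ^ 2 - ℓ := by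
  induction ℓ with
  | zero => simp
  | succ ℓ ih =>
    rw [sum_Icc_succ_top (by omega), ih]
    have : ℓ ≤ ℓ ^ 2 := Nat.le_self_pow two_ne_zero ℓ
    have : (ℓ + 1) ^ 2 = ℓ ^ 2 + 2 * ℓ + 1 := by ring
    omega

lemma pow_mul_prod_eq {n k ℓ : ℕ} (h : 2 * ℓ ≤ n) :
    (k : ℝ) ^ n * ∏ j ∈ Icc 1 ℓ,
        ((n - 2 * j + 2).choose 2 * ((k : ℝ) - 1) ^ 2 * (k : ℝ) ^ (2 * j - 2)) =
      (n.factorial : ℝ) / ((n - 2 * ℓ).factorial : ℝ) * ((k : ℝ) - 1) ^ (2 * ℓ) *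
        (2 : ℝ) ^ (-(ℓ : ℝ)) * (k : ℝ) ^ (n + ℓ ^ 2 - ℓ) := by
  have hfact : ((∏ j ∈ Icc 1 ℓ, (n - 2 * j + 2).choose 2 : ℕ) : ℝ) * 2 ^ ℓ *
      (n - 2 * ℓ).factorial = n.factorial := by
    exact_mod_cast prod_choose_two_mul_factorial h
  have hexp : n + ℓ ^ 2 - ℓ = n + (ℓ ^ 2 - ℓ) :=
    Nat.add_sub_assoc (Nat.le_self_pow two_ne_zero ℓ) n
  rw [prod_mul_distrib, prod_mul_distrib, prod_const, Nat.card_Icc, prod_pow_eq_pow_sum,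
    sum_Icc_two_mul_sub_two, ← Nat.cast_prod, Real.rpow_neg zero_le_two, Real.rpow_natCast, hexp,
    pow_add, ← pow_mul, Nat.add_sub_cancel, ← hfact]
  field_simp

end ClosedForm

end HammingBootstrap

theorem stmt15 (n k : ℕ) (hk : 2 ≤ k) (ℓ : ℕ) (hℓ : ℓ ≤ n / 2) :
    (1 ≤ ℓ → ∀ v : Fin ℓ → (Fin n → Fin k), SeqSpanSeq (hamming n k) ℓ v →
      Nat.card {w : Fin n → Fin k //
          SeqSpanSeq (hamming n k) (ℓ + 1) (Fin.snoc v w)} =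
        Nat.choose (n - 2 * ℓ + 2) 2 * (k - 1) ^ 2 * k ^ (2 * ℓ - 2)) ∧
    (seqCount n k (ℓ + 1) : ℝ) =
        (k : ℝ) ^ n * ∏ j ∈ Finset.Icc 1 ℓ,
          ((Nat.choose (n - 2 * j + 2) 2 : ℝ) * ((k : ℝ) - 1) ^ 2 * (k : ℝ) ^ (2 * j - 2)) ∧
    (seqCount n k (ℓ + 1) : ℝ) =
        (Nat.factorial n : ℝ) / (Nat.factorial (n - 2 * ℓ) : ℝ) * ((k : ℝ) - 1) ^ (2 * ℓ) *
          (2 : ℝ) ^ (-(ℓ : ℝ)) * (k : ℝ) ^ (n + ℓ ^ 2 - ℓ) := by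
  have h2ℓ : 2 * ℓ ≤ n := by omega
  have hprod := HammingBootstrap.seqCount_succ_eq_prod (by omega : 1 ≤ k) h2ℓ
  exact ⟨fun h1 v hv => HammingBootstrap.card_snoc_seqSpanSeq h1 h2ℓ v hv, hprod,
    hprod.trans (HammingBootstrap.pow_mul_prod_eq h2ℓ)⟩
end
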